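/- arXiv:math/0506157 — 5 statements merged into one kernel-verified Lean document; each statement's English description precedes it below -/
import Mathlib

section
/- Let p, q, k be positive integers with gcd(p,q)=1, gcd(p,k)=1, and 1 ≤ k < p. Define E(i) = 1 if iq mod p lies in {0,...,k-1} and 0 otherwise, s(i) = E(1)+...+E(i), and c(i) = -i·k + p·s(i). Then the polynomial F_X(t) = Σ_{i=1}^{p} t^{c(i)} (a Laurent polynomial in t) satisfies: for every p-th root of unity ζ ≠ 1, F_X(ζ) = 0. Equivalently, [p] = t^{p-1} + ... + t + 1 divides F_X(t) in the ring of Laurent polynomials over ℤ. -/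
open LaurentPolynomial

/-- `E(i) = 1` iff the residue of `i*q` modulo `p` lies in `{0,...,k-1}`. -/
def Efn (p q k i : ℕ) : ℕ := if (i * q) % p < k then 1 else 0

/-- `s(i) = E(1) + ⋯ + E(i)`. -/
def sfn (p q k i : ℕ) : ℕ := ∑ j ∈ Finset.Icc 1 i, Efn p q k j

/-- `c(i) = -i·k + p·s(i)`. -/
def cfn (p q k i : ℕ) : ℤ := -(i * k : ℤ) + p * sfn p q k i

/-!
Since `[p] * (t - 1) = t ^ p - 1`, the monomials `t ^ a` and `t ^ b` agree modulo `[p]` whenever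
`a ≡ b (mod p)`. Modulo `p` we have `c(i) ≡ -i k`, and as `k` is invertible modulo `p` the exponents
`c(1), …, c(p)` run through every residue class exactly once. Hence `F_X ≡ 1 + t + ⋯ + t ^ (p-1)`
modulo `[p]`, so `[p]` divides `F_X`; evaluating at a root of unity `ζ ≠ 1`, where `[p]` vanishes,
gives `F_X(ζ) = 0`.
-/

open Finset

section LaurentPolynomial

variable {R : Type*} [CommRing R]

theorem sum_range_T_dvd_T_add_mul_sub_T (p : ℕ) (b : ℤ) (n : ℕ) :
    ∑ i ∈ range p, (T i : R[T;T⁻¹]) ∣ T (b + p * n) - T b := by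
  have hgeom : ∑ i ∈ range p, (T i : R[T;T⁻¹]) ∣ T p - 1 :=
    ⟨T 1 - 1, by simpa [T_pow] using (geom_sum_mul (T 1 : R[T;T⁻¹]) p).symm⟩
  have hsplit : (T (b + p * n) : R[T;T⁻¹]) - T b = T b * (T p ^ n - 1) := by
    rw [T_pow, mul_sub, mul_one, ← T_add, mul_comm (n : ℤ)]
  rw [hsplit]
  exact (hgeom.trans (sub_one_dvd_pow_sub_one _ n)).mul_left _

theorem sum_range_T_dvd_T_sub_T {p : ℕ} {a b : ℤ} (h : a ≡ b [ZMOD p]) :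
    ∑ i ∈ range p, (T i : R[T;T⁻¹]) ∣ T a - T b := by
  obtain ⟨m, hm⟩ := Int.modEq_iff_dvd.1 h
  rcases Int.eq_nat_or_neg m with ⟨n, rfl | rfl⟩
  · rw [dvd_sub_comm, show b = a + p * n by linarith]
    exact sum_range_T_dvd_T_add_mul_sub_T p a n
  · rw [show a = b + p * n by linarith]
    exact sum_range_T_dvd_T_add_mul_sub_T p b n

theorem sum_range_T_dvd_sum_T {ι : Type*} {p : ℕ} (hp : 0 < p) {s : Finset ι} {f : ι → ℤ}
    (hf : ∀ i ∈ s, ∀ j ∈ s, f i ≡ f j [ZMOD p] → i = j) (hs : #s = p) :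
    ∑ i ∈ range p, (T i : R[T;T⁻¹]) ∣ ∑ i ∈ s, T (f i) := by
  have hp' : (p : ℤ) ≠ 0 := by exact_mod_cast hp.ne'
  have hres_mem : ∀ i, 0 ≤ f i % p ∧ f i % p < p :=
    fun i => ⟨Int.emod_nonneg _ hp', Int.emod_lt_of_pos _ (by exact_mod_cast hp)⟩
  have hres_inj : Set.InjOn (fun i => (f i % p).toNat) s := fun i hi j hj hij => by
    refine hf i hi j hj ?_
    have := hres_mem i; have := hres_mem j
    simp only at hij
    unfold Int.ModEq; omega
  have hmaps : ∀ i ∈ s, (f i % p).toNat ∈ range p := fun i _ => by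
    have := hres_mem i
    rw [mem_range]; omega
  have hres : ∑ i ∈ s, (T (f i % p) : R[T;T⁻¹]) = ∑ n ∈ range p, T n :=
    sum_nbij _ hmaps hres_inj
      (surjOn_of_injOn_of_card_le _ hmaps hres_inj (by rw [card_range, hs]))
      fun i _ => by have := hres_mem i; congr 1; omega
  have hdiff : ∑ i ∈ range p, (T i : R[T;T⁻¹]) ∣ ∑ i ∈ s, (T (f i) - T (f i % p)) :=
    dvd_sum fun i _ => sum_range_T_dvd_T_sub_T (Int.mod_modEq _ _).symm
  rwa [sum_sub_distrib, hres, dvd_sub_self_right] at hdiff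

theorem eval₂_eq_zero_of_sum_range_T_dvd {S : Type*} [CommRing S] (f : R →+* S) {p : ℕ}
    {x : Sˣ} (hx : ∑ i ∈ range p, (x : S) ^ i = 0) {F : R[T;T⁻¹]}
    (hF : ∑ i ∈ range p, (T i : R[T;T⁻¹]) ∣ F) : eval₂ f x F = 0 := by
  obtain ⟨G, rfl⟩ := hF
  simp [map_sum, hx]

end LaurentPolynomial

theorem cfn_modEq (p q k i : ℕ) : cfn p q k i ≡ -(i * k : ℤ) [ZMOD p] :=
  Int.add_mul_emod_self_left _ _ _

theorem eq_of_cfn_modEq_cfn {p q k : ℕ} (hpk : Nat.Coprime p k) {i j : ℕ}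
    (hi : i ∈ Icc 1 p) (hj : j ∈ Icc 1 p) (h : cfn p q k i ≡ cfn p q k j [ZMOD p]) : i = j := by
  have hik : (i * k : ℤ) ≡ j * k [ZMOD p] :=
    Int.neg_modEq_neg.1 (((cfn_modEq p q k i).symm.trans h).trans (cfn_modEq p q k j))
  have hij : i ≡ j [MOD p] :=
    (Int.natCast_modEq_iff.1 (by exact_mod_cast hik)).cancel_right_of_coprime hpk
  rw [mem_Icc] at hi hj
  exact le_antisymm (hij.le_of_lt_add (by omega)) (hij.symm.le_of_lt_add (by omega))

theorem stmt2_general (p q k : ℕ) (hp : 0 < p)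
    (hpk : Nat.Coprime p k) :
    (∀ ζ : ℂ, ζ ^ p = 1 → ζ ≠ 1 →
      ∑ i ∈ Finset.Icc 1 p, ζ ^ (cfn p q k i) = 0) ∧
    (∑ n ∈ Finset.range p, (T (n : ℤ) : LaurentPolynomial ℤ)) ∣
      ∑ i ∈ Finset.Icc 1 p, (T (cfn p q k i) : LaurentPolynomial ℤ) := by
  have hdvd : ∑ n ∈ range p, (T (n : ℤ) : LaurentPolynomial ℤ) ∣
      ∑ i ∈ Icc 1 p, (T (cfn p q k i) : LaurentPolynomial ℤ) :=
    sum_range_T_dvd_sum_T hp (fun i hi j hj => eq_of_cfn_modEq_cfn hpk hi hj)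
      (by rw [Nat.card_Icc, Nat.add_sub_cancel])
  refine ⟨fun ζ hζp hζ1 => ?_, hdvd⟩
  have hζ0 : ζ ≠ 0 := by rintro rfl; simp [hp.ne'] at hζp
  have hgeom : ∑ i ∈ range p, ((Units.mk0 ζ hζ0 : ℂˣ) : ℂ) ^ i = 0 := by
    rw [Units.val_mk0, geom_sum_eq hζ1, hζp, sub_self, zero_div]
  simpa [map_sum] using eval₂_eq_zero_of_sum_range_T_dvd (Int.castRingHom ℂ) hgeom hdvd

theorem stmt2 (p q k : ℕ) (hp : 0 < p) (hq : 0 < q) (hpq : Nat.Coprime p q)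
    (hpk : Nat.Coprime p k) (hk : 1 ≤ k) (hkp : k < p) :
    (∀ ζ : ℂ, ζ ^ p = 1 → ζ ≠ 1 →
      ∑ i ∈ Finset.Icc 1 p, ζ ^ (cfn p q k i) = 0) ∧
    (∑ n ∈ Finset.range p, (T (n : ℤ) : LaurentPolynomial ℤ)) ∣
      ∑ i ∈ Finset.Icc 1 p, (T (cfn p q k i) : LaurentPolynomial ℤ) :=
  stmt2_general p q k hp hpk
end

section
/- Let p, q, k be positive integers with gcd(p,q)=1, gcd(p,k)=1, 1 ≤ k < p. With c(i) = -ik + p·s(i) as above, i_1 < ... < i_k the indices with E = 1, d = min_{1≤i≤p} c(i), and e = min_{1≤j≤k} (c(i_j) - p), one has d = e + k. -/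
/-!
Since `c(i+1) = c(i) - k + p·E(i+1)`, every index `m` with `E(m) = 1` gives
`c(m) - p + k = c(m - 1)`, so `e + k` is the minimum of `c` over the predecessors of the
`i_j`. Each such predecessor lies in `{0, …, p-1}`, and `c(0) = 0 ≥ c(p)` because
`s(p) ≤ k` (the map `i ↦ iq mod p` is injective on `{1, …, p}`); hence `d ≤ e + k`.
Conversely `c` decreases by `k` at every step with `E = 0`, so from any `i` it only goes
down until the next index `m` with `E(m) = 1` (one exists, `E(p) = 1`), where
`c(m) - p + k = c(m - 1) ≤ c(i)`; hence `e + k ≤ d`.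
-/

open Finset

lemma Nat.ModEq.eq_of_mem_Icc_one {n a b : ℕ} (h : a ≡ b [MOD n]) (ha : a ∈ Icc 1 n)
    (hb : b ∈ Icc 1 n) : a = b := by
  rw [mem_Icc] at ha hb
  have h' : a - 1 ≡ b - 1 [MOD n] :=
    Nat.ModEq.add_right_cancel' 1 (by rwa [Nat.sub_add_cancel ha.1, Nat.sub_add_cancel hb.1])
  have := h'.eq_of_lt_of_lt (by omega) (by omega)
  omega

section

variable {p q k : ℕ}

lemma Efn_eq_zero_or_one (i : ℕ) : Efn p q k i = 0 ∨ Efn p q k i = 1 := by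
  unfold Efn; split <;> simp

lemma Efn_self (hk : 0 < k) : Efn p q k p = 1 := by
  simp [Efn, Nat.mul_mod_right, hk]

lemma cfn_zero : cfn p q k 0 = 0 := by
  simp [cfn, sfn]

lemma cfn_succ (i : ℕ) : cfn p q k (i + 1) = cfn p q k i - k + p * Efn p q k (i + 1) := by
  simp only [cfn, sfn, Finset.sum_Icc_succ_top (Nat.le_add_left 1 i)]
  push_cast
  ring

lemma sfn_self_le (hpq : p.Coprime q) : sfn p q k p ≤ k := by
  calc sfn p q k p = #{j ∈ Icc 1 p | j * q % p < k} := by rw [card_filter]; rfl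
    _ ≤ #(range k) := by
        refine card_le_card_of_injOn (fun j => j * q % p) (fun j hj => by simp_all) ?_
        intro i hi j hj hij
        exact (Nat.ModEq.cancel_right_of_coprime hpq hij).eq_of_mem_Icc_one
          (mem_filter.1 hi).1 (mem_filter.1 hj).1
    _ = k := card_range k

lemma cfn_self_nonpos (hpq : p.Coprime q) : cfn p q k p ≤ 0 := by
  have hs : (sfn p q k p : ℤ) ≤ k := by exact_mod_cast sfn_self_le hpq
  have := mul_le_mul_of_nonneg_left hs (Nat.cast_nonneg (α := ℤ) p)
  unfold cfn
  linarith

lemma exists_mem_Icc_cfn_le (hpq : p.Coprime q) (hp : 0 < p) {n : ℕ} (hn : n ≤ p) :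
    ∃ i ∈ Icc 1 p, cfn p q k i ≤ cfn p q k n := by
  rcases n.eq_zero_or_pos with rfl | hn₀
  · exact ⟨p, mem_Icc.2 ⟨hp, le_rfl⟩, cfn_zero.symm ▸ cfn_self_nonpos hpq⟩
  · exact ⟨n, mem_Icc.2 ⟨hn₀, hn⟩, le_rfl⟩

lemma exists_Efn_eq_one_cfn_le {n : ℕ} (hn : Efn p q k n = 1) (i : ℕ) (hi : i < n) :
    ∃ m ∈ Ioc i n, Efn p q k m = 1 ∧ cfn p q k m - p + k ≤ cfn p q k i := by
  rcases Efn_eq_zero_or_one (p := p) (q := q) (k := k) (i + 1) with h | h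
  · have hi' : i + 1 < n := lt_of_le_of_ne hi (by rintro rfl; simp_all)
    obtain ⟨m, hm, hEm, hc⟩ := exists_Efn_eq_one_cfn_le hn (i + 1) hi'
    refine ⟨m, by simp only [mem_Ioc] at hm ⊢; omega, hEm, hc.trans ?_⟩
    rw [cfn_succ, h]
    push_cast
    linarith
  · exact ⟨i + 1, mem_Ioc.2 ⟨i.lt_succ_self, hi⟩, h, by rw [cfn_succ, h]; push_cast; linarith⟩
termination_by n - i

end

theorem stmt8_general (p q k : ℕ) (hpq : Nat.Coprime p q)
    (hk : 1 ≤ k) (hkp : k < p)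
    (d e : ℤ)
    (hd : IsLeast {x : ℤ | ∃ i ∈ Finset.Icc 1 p, x = cfn p q k i} d)
    (he : IsLeast {x : ℤ | ∃ i ∈ (Finset.Icc 1 p).filter (fun i => Efn p q k i = 1),
        x = cfn p q k i - p} e) :
    d = e + k := by
  obtain ⟨⟨i₀, hi₀, rfl⟩, hd⟩ := hd
  obtain ⟨⟨m₀, hm₀, rfl⟩, he⟩ := he
  simp only [mem_filter, mem_Icc] at hi₀ hm₀
  apply le_antisymm
  · obtain ⟨m, rfl⟩ : ∃ m, m₀ = m + 1 := ⟨m₀ - 1, by omega⟩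
    obtain ⟨i, hi, hci⟩ := exists_mem_Icc_cfn_le (k := k) hpq (by omega) (n := m) (by omega)
    have := hd ⟨i, hi, rfl⟩
    rw [cfn_succ, hm₀.2]
    push_cast
    linarith
  · rcases hi₀.2.lt_or_eq with hlt | hi₀p
    · obtain ⟨m, hm, hEm, hc⟩ := exists_Efn_eq_one_cfn_le (q := q) (Efn_self hk) i₀ hlt
      have := he ⟨m, by simp only [mem_Ioc] at hm; simp [hEm]; omega, rfl⟩
      linarith
    · have := he ⟨p, by simp [Efn_self hk]; omega, rfl⟩
      have : (k : ℤ) ≤ p := by exact_mod_cast hkp.le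
      rw [hi₀p]
      linarith

theorem stmt8 (p q k : ℕ) (hp : 0 < p) (hq : 0 < q) (hpq : Nat.Coprime p q)
    (hpk : Nat.Coprime p k) (hk : 1 ≤ k) (hkp : k < p)
    (d e : ℤ)
    (hd : IsLeast {x : ℤ | ∃ i ∈ Finset.Icc 1 p, x = cfn p q k i} d)
    (he : IsLeast {x : ℤ | ∃ i ∈ (Finset.Icc 1 p).filter (fun i => Efn p q k i = 1),
        x = cfn p q k i - p} e) :
    d = e + k :=
  stmt8_general p q k hpq hk hkp d e hd he
end

section
/- Let p, q, k be positive integers with gcd(p,q)=1, gcd(p,k)=1, 1 ≤ k < p. Define for i ∈ {0,...,k-1}: Ψ(i) the unique integer in {1,...,p} with Ψ(i)q ≡ i (mod p), and Φ(i) = #{j : 1 ≤ j ≤ k-1, Ψ(j) < Ψ(i)}. Let also i_1 < ... < i_k be the indices in {1,...,p} with i q mod p ∈ {0,...,k-1}, and c(i_j) = -i_j k + p j. Then Σ_{i=0}^{k-1} t^{Φ(i)p - Ψ(i)k} = Σ_{j=1}^{k} t^{c(i_j) - p} as Laurent polynomials; i.e., the multiset {Φ(i)p - Ψ(i)k : 0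 ≤ i ≤ k-1} equals the multiset {c(i_j) - p : 1 ≤ j ≤ k}. -/
/-
Multiplication by `q` is a bijection modulo `p`, so `Ψ` maps `{0, …, k-1}` bijectively onto the
indices `i ∈ {1, …, p}` with `i q mod p < k`, with inverse `i ↦ i q mod p`. Under this bijection
`s(Ψ i)` counts the values `Ψ j ≤ Ψ i`; as `Ψ 0 = p` is the largest value, that count is
`Φ(i) + 1`, whence `c(Ψ i) - p = Φ(i) p - Ψ(i) k`.
-/

lemma Nat.ModEq.eq_of_mem_Icc {p a b : ℕ} (h : a ≡ b [MOD p]) (ha : a ∈ Finset.Icc 1 p)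
    (hb : b ∈ Finset.Icc 1 p) : a = b := by
  rw [Finset.mem_Icc] at ha hb
  exact h.eq_of_abs_lt (by rw [abs_lt]; omega)

lemma sfn_eq_card (p q k n : ℕ) :
    sfn p q k n = ((Finset.Icc 1 n).filter (fun j => j * q % p < k)).card := by
  simp only [sfn, Efn, Finset.card_filter]

section

variable {p q k : ℕ} {Ψ : ℕ → ℕ}
  (hΨ : ∀ i < k, 1 ≤ Ψ i ∧ Ψ i ≤ p ∧ Ψ i * q ≡ i [MOD p])
include hΨ

lemma inverse_mul_mod (hkp : k < p) {i : ℕ} (hi : i < k) : Ψ i * q % p = i :=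
  Eq.trans (hΨ i hi).2.2 (Nat.mod_eq_of_lt (hi.trans hkp))

lemma inverse_injOn (hkp : k < p) : Set.InjOn Ψ (Finset.range k) := by
  intro a ha b hb hab
  rw [Finset.coe_range, Set.mem_Iio] at ha hb
  rw [← inverse_mul_mod hΨ hkp ha, ← inverse_mul_mod hΨ hkp hb, hab]

lemma inverse_apply_mul_mod (hpq : p.Coprime q) {x : ℕ} (hx : x ∈ Finset.Icc 1 p)
    (hxk : x * q % p < k) : Ψ (x * q % p) = x := by
  obtain ⟨h1, h2, hmod⟩ := hΨ _ hxk
  refine Nat.ModEq.eq_of_mem_Icc ?_ (Finset.mem_Icc.2 ⟨h1, h2⟩) hx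
  exact Nat.ModEq.cancel_right_of_coprime hpq (hmod.trans (Nat.mod_modEq _ _))

lemma inverse_zero (hpq : p.Coprime q) (hk : 0 < k) : Ψ 0 = p := by
  obtain ⟨h1, h2, hmod⟩ := hΨ 0 hk
  have : p ∣ Ψ 0 := hpq.dvd_of_dvd_mul_right (Nat.modEq_zero_iff_dvd.1 hmod)
  exact le_antisymm h2 (Nat.le_of_dvd h1 this)

lemma filter_mul_mod_lt_eq_image (hpq : p.Coprime q) (hkp : k < p) {n : ℕ} (hn : n ≤ p) :
    (Finset.Icc 1 n).filter (fun x => x * q % p < k)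
      = ((Finset.range k).filter (fun j => Ψ j ≤ n)).image Ψ := by
  ext x
  simp only [Finset.mem_filter, Finset.mem_Icc, Finset.mem_image, Finset.mem_range]
  constructor
  · rintro ⟨⟨hx1, hxn⟩, hxk⟩
    have hx := inverse_apply_mul_mod hΨ hpq (Finset.mem_Icc.2 ⟨hx1, hxn.trans hn⟩) hxk
    exact ⟨x * q % p, ⟨hxk, by rwa [hx]⟩, hx⟩
  · rintro ⟨j, ⟨hj, hjn⟩, rfl⟩
    exact ⟨⟨(hΨ j hj).1, hjn⟩, (inverse_mul_mod hΨ hkp hj).symm ▸ hj⟩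

lemma filter_efn_eq_image (hpq : p.Coprime q) (hkp : k < p) :
    (Finset.Icc 1 p).filter (fun i => Efn p q k i = 1) = (Finset.range k).image Ψ := by
  have hall : ∀ j ∈ Finset.range k, Ψ j ≤ p := fun j hj => (hΨ j (Finset.mem_range.1 hj)).2.1
  rw [← Finset.filter_true_of_mem hall, ← filter_mul_mod_lt_eq_image hΨ hpq hkp le_rfl]
  refine Finset.filter_congr fun x _ => ?_
  unfold Efn
  split_ifs with h <;> simp [h]

lemma filter_le_inverse_eq_insert (hpq : p.Coprime q) (hkp : k < p) {i : ℕ} (hi : i < k) :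
    (Finset.range k).filter (fun j => Ψ j ≤ Ψ i)
      = insert i ((Finset.Icc 1 (k - 1)).filter (fun j => Ψ j < Ψ i)) := by
  have hΨ0 := inverse_zero hΨ hpq (by omega)
  ext j
  simp only [Finset.mem_filter, Finset.mem_range, Finset.mem_insert, Finset.mem_Icc]
  constructor
  · rintro ⟨hj, hle⟩
    by_cases hji : j = i
    · exact Or.inl hji
    · have hlt : Ψ j < Ψ i :=
        hle.lt_of_ne fun h => hji (inverse_injOn hΨ hkp (by simpa) (by simpa) h)
      have hj0 : j ≠ 0 := by
        rintro rfl
        exact absurd (hΨ i hi).2.1 (by omega)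
      exact Or.inr ⟨⟨by omega, by omega⟩, hlt⟩
  · rintro (rfl | ⟨⟨_, hj⟩, hlt⟩)
    · exact ⟨hi, le_rfl⟩
    · exact ⟨by omega, hlt.le⟩

lemma sfn_inverse (hpq : p.Coprime q) (hkp : k < p) {i : ℕ} (hi : i < k) :
    sfn p q k (Ψ i) = ((Finset.Icc 1 (k - 1)).filter (fun j => Ψ j < Ψ i)).card + 1 := by
  rw [sfn_eq_card, filter_mul_mod_lt_eq_image hΨ hpq hkp (hΨ i hi).2.1,
    Finset.card_image_of_injOn
      ((inverse_injOn hΨ hkp).mono (Finset.coe_subset.2 (Finset.filter_subset _ _))),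
    filter_le_inverse_eq_insert hΨ hpq hkp hi, Finset.card_insert_of_notMem (by simp)]

end

theorem stmt9_general (p q k : ℕ) (hpq : Nat.Coprime p q)
    (hkp : k < p)
    (Ψ : ℕ → ℕ)
    (hΨ : ∀ i < k, 1 ≤ Ψ i ∧ Ψ i ≤ p ∧ Ψ i * q ≡ i [MOD p]) :
    Multiset.map
        (fun i => ((((Finset.Icc 1 (k - 1)).filter (fun j => Ψ j < Ψ i)).card : ℤ) * p
          - (Ψ i : ℤ) * k))
        (Finset.range k).val
      = Multiset.map (fun i => cfn p q k i - p)
        ((Finset.Icc 1 p).filter (fun i => Efn p q k i = 1)).val := by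
  rw [filter_efn_eq_image hΨ hpq hkp, Finset.image_val_of_injOn (inverse_injOn hΨ hkp),
    Multiset.map_map]
  refine Multiset.map_congr rfl fun i hi => ?_
  rw [Function.comp_apply, cfn, sfn_inverse hΨ hpq hkp (by simpa using hi)]
  push_cast
  ring

theorem stmt9 (p q k : ℕ) (hp : 0 < p) (hq : 0 < q) (hpq : Nat.Coprime p q)
    (hpk : Nat.Coprime p k) (hk : 1 ≤ k) (hkp : k < p)
    (Ψ : ℕ → ℕ)
    (hΨ : ∀ i < k, 1 ≤ Ψ i ∧ Ψ i ≤ p ∧ Ψ i * q ≡ i [MOD p]) :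
    Multiset.map
        (fun i => ((((Finset.Icc 1 (k - 1)).filter (fun j => Ψ j < Ψ i)).card : ℤ) * p
          - (Ψ i : ℤ) * k))
        (Finset.range k).val
      = Multiset.map (fun i => cfn p q k i - p)
        ((Finset.Icc 1 p).filter (fun i => Efn p q k i = 1)).val :=
  stmt9_general p q k hpq hkp Ψ hΨ
end

section
/- Let p, q, k be positive integers with gcd(p,q)=1, gcd(p,k)=1, 1 ≤ k < p. Define the Laurent polynomial F_Y(t) = Σ_{j=1}^{k} t^{c(i_j) - p}, where i_1 < ... < i_k enumerate the indices i ∈ {1,...,p} with iq mod p ∈ {0,...,k-1}, and c(i_j) = -i_j k + pj. Then [k] = t^{k-1} + ... + t + 1 divides F_Y(t) in ℤ[t, t^{-1}]. -/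
open LaurentPolynomial

/-!
Modulo `[k] = 1 + T + ⋯ + T^(k-1)` one has `T^k ≡ 1`, so `T^a` only depends on `a mod k`, and a sum
of `k` monomials with pairwise incongruent exponents mod `k` is `≡ [k] ≡ 0`. Since `i ↦ i q mod p`
permutes the residues mod `p`, there are exactly `k` indices `i_j`, and `s(i_j) = j`, so the `j`-th
exponent is `c(i_j) - p ≡ p (j - 1) (mod k)`; these are pairwise incongruent because `p` is prime
to `k`.
-/

open Finset

section GeomSum

variable {R : Type*} [CommRing R]

theorem geom_sum_T_dvd_T_natCast_mul_sub_one (k n : ℕ) :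
    (∑ i ∈ range k, (T i : R[T;T⁻¹])) ∣ T (k * n : ℕ) - 1 := by
  have hk : (∑ i ∈ range k, (T i : R[T;T⁻¹])) ∣ T k - 1 :=
    ⟨T 1 - 1, by simpa [T_pow] using (geom_sum_mul (T 1 : R[T;T⁻¹]) k).symm⟩
  refine hk.trans ?_
  simpa [T_pow, mul_comm] using sub_dvd_pow_sub_pow (T k : R[T;T⁻¹]) 1 n

theorem geom_sum_T_dvd_T_sub_T {k : ℕ} {a b : ℤ} (h : (k : ℤ) ∣ a - b) :
    (∑ i ∈ range k, (T i : R[T;T⁻¹])) ∣ T a - T b := by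
  wlog hba : b ≤ a generalizing a b
  · simpa using (this (dvd_sub_comm.mp h) (by omega)).neg_right
  obtain ⟨n, hn⟩ := Int.eq_ofNat_of_zero_le (sub_nonneg.mpr hba)
  obtain ⟨m, rfl⟩ := Int.natCast_dvd_natCast.mp (hn ▸ h)
  have hsplit : (T a : R[T;T⁻¹]) - T b = T b * (T (k * m : ℕ) - 1) := by
    rw [mul_sub, ← T_add, ← hn, mul_one, add_sub_cancel]
  rw [hsplit]
  exact (geom_sum_T_dvd_T_natCast_mul_sub_one k m).mul_left _

theorem geom_sum_T_dvd_sum_T {ι : Type*} {s : Finset ι} {k : ℕ} {e : ι → ℤ}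
    (hcard : #s = k) (hinj : Set.InjOn (fun i => e i % k) s) :
    (∑ n ∈ range k, (T n : R[T;T⁻¹])) ∣ ∑ i ∈ s, T (e i) := by
  classical
  rcases Nat.eq_zero_or_pos k with rfl | hk
  · simp [card_eq_zero.mp hcard]
  set r : ι → ℕ := fun i => (e i % k).toNat
  have hr : ∀ i, (r i : ℤ) = e i % k := fun i => Int.toNat_of_nonneg (Int.emod_nonneg _ (by omega))
  have hr_inj : Set.InjOn r s := fun i hi j hj hij =>
    hinj hi hj (by simpa only [hr] using congrArg ((↑) : ℕ → ℤ) hij)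
  have himage : s.image r = range k := by
    refine eq_of_subset_of_card_le (fun n hn => ?_)
      (by rw [card_image_of_injOn hr_inj, hcard, card_range])
    obtain ⟨i, -, rfl⟩ := mem_image.mp hn
    rw [mem_range, ← Int.ofNat_lt, hr]
    exact Int.emod_lt_of_pos _ (by omega)
  have hsum : ∑ i ∈ s, (T (e i) : R[T;T⁻¹]) =
      ∑ i ∈ s, (T (e i) - T (r i)) + ∑ n ∈ range k, (T n : R[T;T⁻¹]) := by
    rw [← himage, sum_image hr_inj, ← sum_add_distrib]
    simp only [sub_add_cancel]
  rw [hsum]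
  refine dvd_add (dvd_sum fun i _ => geom_sum_T_dvd_T_sub_T ?_) dvd_rfl
  rw [hr]
  exact Int.dvd_self_sub_emod

end GeomSum

section Residues

variable {p q k : ℕ}

theorem injOn_mul_mod_Icc (hpq : p.Coprime q) : Set.InjOn (fun i => i * q % p) (Icc 1 p) := by
  intro i hi j hj hij
  simp only [coe_Icc, Set.mem_Icc] at hi hj
  have hdvd : (p : ℤ) ∣ j - i := Nat.modEq_iff_dvd.mp (Nat.ModEq.cancel_right_of_coprime hpq hij)
  have := Int.eq_zero_of_abs_lt_dvd hdvd (abs_lt.mpr ⟨by omega, by omega⟩)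
  omega

theorem card_filter_mul_mod_lt (hpq : p.Coprime q) (hkp : k ≤ p) :
    #{i ∈ Icc 1 p | i * q % p < k} = k := by
  have himage : (Icc 1 p).image (fun i => i * q % p) = range p := by
    refine eq_of_subset_of_card_le (fun n hn => ?_)
      (by simp [card_image_of_injOn (injOn_mul_mod_Icc hpq)])
    obtain ⟨i, hi, rfl⟩ := mem_image.mp hn
    exact mem_range.mpr (Nat.mod_lt _ (by rw [mem_Icc] at hi; omega))
  have hlt : (range p).filter (· < k) = range k := by
    ext n
    simp only [mem_filter, mem_range]
    omega
  rw [← card_image_of_injOn ((injOn_mul_mod_Icc hpq).mono (filter_subset _ _)),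
    ← filter_image (p := (· < k)), himage, hlt, card_range]

theorem Efn_eq_one_iff {i : ℕ} : Efn p q k i = 1 ↔ i * q % p < k := by
  unfold Efn
  split_ifs <;> simp_all

theorem sfn_eq_card_s10 (i : ℕ) : sfn p q k i = #{j ∈ Icc 1 i | j * q % p < k} := by
  simp only [sfn, Efn, sum_boole, Nat.cast_id]

theorem sfn_lt_sfn {i j : ℕ} (hij : i < j) (hj : j * q % p < k) : sfn p q k i < sfn p q k j := by
  rw [sfn_eq_card_s10, sfn_eq_card_s10]
  refine card_lt_card ((ssubset_iff_of_subset ?_).mpr ⟨j, ?_, ?_⟩)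
  · exact filter_subset_filter _ (Icc_subset_Icc_right hij.le)
  · simp only [mem_filter, mem_Icc]
    omega
  · simp only [mem_filter, mem_Icc, not_and]
    omega

theorem strictMonoOn_sfn : StrictMonoOn (sfn p q k) {i | i * q % p < k} :=
  fun _ _ _ hj hij => sfn_lt_sfn hij hj

theorem one_le_sfn {i : ℕ} (hi : 1 ≤ i) (hiq : i * q % p < k) : 1 ≤ sfn p q k i := by
  simpa [sfn, Nat.one_le_iff_ne_zero, Nat.pos_iff_ne_zero] using sfn_lt_sfn (p := p) hi hiq

theorem sfn_le (hpq : p.Coprime q) (hkp : k ≤ p) {i : ℕ} (hi : i ≤ p) : sfn p q k i ≤ k := by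
  rw [sfn_eq_card_s10]
  exact (card_le_card (filter_subset_filter _ (Icc_subset_Icc_right hi))).trans_eq
    (card_filter_mul_mod_lt hpq hkp)

theorem cfn_sub_emod {i : ℕ} (hi : 1 ≤ sfn p q k i) :
    (cfn p q k i - p) % k = ((p * (sfn p q k i - 1) % k : ℕ) : ℤ) := by
  have : cfn p q k i - p = p * ((sfn p q k i - 1 : ℕ) : ℤ) + k * (-i) := by
    rw [cfn, Nat.cast_sub hi]
    ring
  rw [this, Int.add_mul_emod_self_left]
  norm_cast

theorem injOn_cfn_sub_emod (hpq : p.Coprime q) (hpk : p.Coprime k) (hkp : k ≤ p) :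
    Set.InjOn (fun i => (cfn p q k i - p) % k) (↑{i ∈ Icc 1 p | i * q % p < k} : Set ℕ) := by
  intro i hi j hj hij
  simp only [coe_filter, mem_Icc, Set.mem_ofPred_eq] at hi hj hij
  have hi1 := one_le_sfn hi.1.1 hi.2
  have hj1 := one_le_sfn hj.1.1 hj.2
  have hik := sfn_le hpq hkp hi.1.2
  have hjk := sfn_le hpq hkp hj.1.2
  rw [cfn_sub_emod hi1, cfn_sub_emod hj1, Nat.cast_inj] at hij
  have hs : sfn p q k i - 1 = sfn p q k j - 1 :=
    (Nat.ModEq.cancel_left_of_coprime hpk.symm hij).eq_of_lt_of_lt (by omega) (by omega)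
  exact strictMonoOn_sfn.injOn hi.2 hj.2 (by omega)

end Residues

theorem stmt10_general (p q k : ℕ) (hpq : Nat.Coprime p q)
    (hpk : Nat.Coprime p k) (hkp : k < p) :
    (∑ n ∈ Finset.range k, (T (n : ℤ) : LaurentPolynomial ℤ)) ∣
      ∑ i ∈ (Finset.Icc 1 p).filter (fun i => Efn p q k i = 1),
        (T (cfn p q k i - p) : LaurentPolynomial ℤ) := by
  rw [filter_congr fun i _ => Efn_eq_one_iff]
  exact geom_sum_T_dvd_sum_T (card_filter_mul_mod_lt hpq hkp.le)
    (injOn_cfn_sub_emod hpq hpk hkp.le)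

theorem stmt10 (p q k : ℕ) (hp : 0 < p) (hq : 0 < q) (hpq : Nat.Coprime p q)
    (hpk : Nat.Coprime p k) (hk : 1 ≤ k) (hkp : k < p) :
    (∑ n ∈ Finset.range k, (T (n : ℤ) : LaurentPolynomial ℤ)) ∣
      ∑ i ∈ (Finset.Icc 1 p).filter (fun i => Efn p q k i = 1),
        (T (cfn p q k i - p) : LaurentPolynomial ℤ) :=
  stmt10_general p q k hpq hpk hkp
end

section
/- Let 𝒰 and 𝒱 be finite sets of nonnegative integers with 𝒱 = {u + 1 : u ∈ 𝒰} (so 𝒱 is the shift of 𝒰 by 1). Suppose 0 ∉ 𝒰. Then the elements of the symmetric difference (𝒰 ∪ 𝒱) \ (𝒰 ∩ 𝒱), listed in increasing order, alternate between elements of 𝒰 and elements of 𝒱, beginning with an element of 𝒰 \ 𝒱 and ending with an element of 𝒱 \ 𝒰. In particular, the symmetric difference has even cardinality 2m and can be written as u_1 < v_1 < u_2 < v_2 < ... < u_m < v_m with u_i ∈ 𝒰 \ 𝒱 and v_i ∈ 𝒱 \ 𝒰. -/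
/-!
Decompose `U` into maximal runs of consecutive integers `[a, c)`. The shift `U + 1` covers
exactly the runs `[a + 1, c]`, so each run contributes its start `a` to `U \ (U + 1)` and the
point `c` just after it to `(U + 1) \ U`, and everything else cancels. Since distinct runs are
separated by at least one gap, these pairs `a < c` follow each other in increasing order.
-/

open Finset

theorem image_range_add_one {α : Type*} [DecidableEq α] (f : ℕ → α) (m : ℕ) :
    (range (m + 1)).image f = insert (f 0) ((range m).image (fun i => f (i + 1))) := by
  rw [range_add_one', image_insert, map_eq_image, image_image]
  rfl

section

variable {α : Type*} [LinearOrder α]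

def Interlaced (P Q : Finset α) : Prop :=
  ∃ m : ℕ, ∃ u v : ℕ → α,
    (∀ i < m, u i ∈ P ∧ v i ∈ Q) ∧
    (∀ i < m, u i < v i) ∧
    (∀ i, i + 1 < m → v i < u (i + 1)) ∧
    P ∪ Q = (range m).image u ∪ (range m).image v

namespace Interlaced

theorem empty [Inhabited α] : Interlaced (∅ : Finset α) ∅ :=
  ⟨0, default, default, by simp, by simp, by simp, by simp⟩

theorem insert_insert {P Q : Finset α} {a b : α} (h : Interlaced P Q) (hab : a < b)
    (hb : ∀ x ∈ P ∪ Q, b < x) : Interlaced (insert a P) (insert b Q) := by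
  obtain ⟨m, u, v, hmem, hlt, hlt_succ, hPQ⟩ := h
  refine ⟨m + 1, fun | 0 => a | i + 1 => u i, fun | 0 => b | i + 1 => v i, ?_, ?_, ?_, ?_⟩
  · rintro (_ | i) hi
    · exact ⟨mem_insert_self a P, mem_insert_self b Q⟩
    · exact ⟨mem_insert_of_mem (hmem i (by omega)).1, mem_insert_of_mem (hmem i (by omega)).2⟩
  · rintro (_ | i) hi
    · exact hab
    · exact hlt i (by omega)
  · rintro (_ | i) hi
    · exact hb (u 0) (mem_union_left Q (hmem 0 (by omega)).1)
    · exact hlt_succ i (by omega)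
  · rw [image_range_add_one, image_range_add_one]
    dsimp only
    rw [insert_union, union_insert, insert_union, union_insert, hPQ]

end Interlaced

end

theorem mem_image_add_one {U : Finset ℕ} {x : ℕ} :
    x ∈ U.image (· + 1) ↔ 0 < x ∧ x - 1 ∈ U := by
  constructor
  · intro hx
    obtain ⟨y, hy, rfl⟩ := mem_image.1 hx
    simpa using hy
  · rintro ⟨hx, hx1⟩
    exact mem_image.2 ⟨x - 1, hx1, by omega⟩

theorem sdiff_image_add_one_of_lowest_run {U : Finset ℕ} {a c : ℕ} (hac : a < c)
    (hrun : ∀ x, a ≤ x → x < c → x ∈ U) (hc : c ∉ U) (ha : ∀ x ∈ U, a ≤ x) :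
    let W := U.filter (c < ·)
    U \ U.image (· + 1) = insert a (W \ W.image (· + 1)) ∧
      U.image (· + 1) \ U = insert c (W.image (· + 1) \ W) := by
  have mem_iff : ∀ x, x ∈ U ↔ a ≤ x ∧ x < c ∨ c < x ∧ x ∈ U := by
    intro x
    constructor
    · intro hx
      rcases lt_trichotomy x c with h | rfl | h
      · exact Or.inl ⟨ha x hx, h⟩
      · exact absurd hx hc
      · exact Or.inr ⟨h, hx⟩
    · rintro (⟨h₁, h₂⟩ | ⟨_, h⟩)
      · exact hrun x h₁ h₂
      · exact h
  constructor <;> ext x <;> simp only [mem_sdiff, mem_insert, mem_image_add_one, mem_filter] <;>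
    rw [mem_iff x, mem_iff (x - 1)] <;> grind

theorem interlaced_sdiff_image_add_one (U : Finset ℕ) :
    Interlaced (U \ U.image (· + 1)) (U.image (· + 1) \ U) := by
  induction U using Finset.strongInduction with
  | _ U ih =>
    rcases U.eq_empty_or_nonempty with rfl | hU
    · simpa using Interlaced.empty
    set a := U.min' hU
    have hgap : ∃ c, a < c ∧ c ∉ U := by
      refine ⟨a + U.sup id + 1, by omega, fun h => ?_⟩
      have : a + U.sup id + 1 ≤ U.sup id := le_sup (f := id) h
      omega
    set c := Nat.find hgap
    obtain ⟨hac, hc⟩ : a < c ∧ c ∉ U := Nat.find_spec hgap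
    have hrun : ∀ x, a ≤ x → x < c → x ∈ U := by
      intro x hax hxc
      rcases hax.eq_or_lt with rfl | hax
      · exact U.min'_mem hU
      · simpa [hax] using Nat.find_min hgap hxc
    obtain ⟨hstart, hend⟩ :=
      sdiff_image_add_one_of_lowest_run hac hrun hc U.min'_le
    rw [hstart, hend]
    refine (ih _ (filter_ssubset.2 ⟨a, U.min'_mem hU, hac.not_gt⟩)).insert_insert hac ?_
    intro x hx
    simp only [mem_union, mem_sdiff, mem_filter, mem_image_add_one] at hx
    omega

theorem stmt13_general (U : Finset ℕ) (V : Finset ℕ)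
    (hV : V = U.image (fun u => u + 1)) :
    ∃ m : ℕ, ∃ u v : ℕ → ℕ,
      (∀ i < m, u i ∈ U \ V ∧ v i ∈ V \ U) ∧
      (∀ i < m, u i < v i) ∧
      (∀ i, i + 1 < m → v i < u (i + 1)) ∧
      (U ∪ V) \ (U ∩ V) =
        (Finset.range m).image u ∪ (Finset.range m).image v := by
  rw [← sup_eq_union, ← inf_eq_inter, ← symmDiff_eq_sup_sdiff_inf, Finset.symmDiff_def, hV]
  exact interlaced_sdiff_image_add_one U

theorem stmt13 (U : Finset ℕ) (hU0 : 0 ∉ U) (V : Finset ℕ)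
    (hV : V = U.image (fun u => u + 1)) :
    ∃ m : ℕ, ∃ u v : ℕ → ℕ,
      (∀ i < m, u i ∈ U \ V ∧ v i ∈ V \ U) ∧
      (∀ i < m, u i < v i) ∧
      (∀ i, i + 1 < m → v i < u (i + 1)) ∧
      (U ∪ V) \ (U ∩ V) =
        (Finset.range m).image u ∪ (Finset.range m).image v :=
  stmt13_general U V hV
end
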